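/- In the election of the clique reduction (voters [ν] ∪ N_0 with |N_0| = (κ−1)ν, candidates {p_1,p_2,p_3}, ℓ = ν rounds, approvals as defined), the outcome o = (p_3,...,p_3) fails to provide weak JR if and only if the graph G contains a clique of size κ. -/
import Mathlib


open Finset

/-- Satisfaction of voter `i` under outcome `o`: number of rounds `t` with `o t ∈ s i t`. -/
def sat {V : Type*} {ℓ : ℕ} {P : Type*} [DecidableEq P]
    (s : V → Fin ℓ → Finset P) (o : Fin ℓ → P) (i : V) : ℕ :=
  (univ.filter fun t => o t ∈ s i t).card

/-- Agreement of a group `N'`: number of rounds in which all members approve a common candidate. -/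
def agreement {V : Type*} {ℓ : ℕ} {P : Type*} [Fintype P] [DecidableEq P]
    (s : V → Fin ℓ → Finset P) (N' : Finset V) : ℕ :=
  (univ.filter fun t : Fin ℓ => ∃ p : P, ∀ i ∈ N', p ∈ s i t).card

/-- Demand `α(N') = ⌊β(N')·|N'|/n⌋`. -/
def demand {V : Type*} [Fintype V] {ℓ : ℕ} {P : Type*} [Fintype P] [DecidableEq P]
    (s : V → Fin ℓ → Finset P) (N' : Finset V) : ℕ :=
  agreement s N' * N'.card / Fintype.card V

/-- Outcome `o` provides extended justified representation. -/
def EJR {V : Type*} [Fintype V] [DecidableEq V] {ℓ : ℕ} {P : Type*} [Fintype P] [DecidableEq P]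
    (s : V → Fin ℓ → Finset P) (o : Fin ℓ → P) : Prop :=
  ∀ N' : Finset V, N'.Nonempty → ∃ i ∈ N', demand s N' ≤ sat s o i

/-- Outcome `o` provides proportional justified representation. -/
def PJR {V : Type*} [Fintype V] [DecidableEq V] {ℓ : ℕ} {P : Type*} [Fintype P] [DecidableEq P]
    (s : V → Fin ℓ → Finset P) (o : Fin ℓ → P) : Prop :=
  ∀ N' : Finset V,
    demand s N' ≤ (univ.filter fun t : Fin ℓ => ∃ i ∈ N', o t ∈ s i t).card

/-- Outcome `o` provides justified representation. -/
def JR {V : Type*} [Fintype V] [DecidableEq V] {ℓ : ℕ} {P : Type*} [Fintype P] [DecidableEq P]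
    (s : V → Fin ℓ → Finset P) (o : Fin ℓ → P) : Prop :=
  ∀ N' : Finset V, 0 < demand s N' → ∃ i ∈ N', 0 < sat s o i

/-- Outcome `o` provides weak justified representation: only groups that agree in all
`ℓ` rounds are considered. -/
def wJR {V : Type*} [Fintype V] [DecidableEq V] {ℓ : ℕ} {P : Type*} [Fintype P] [DecidableEq P]
    (s : V → Fin ℓ → Finset P) (o : Fin ℓ → P) : Prop :=
  ∀ N' : Finset V, agreement s N' = ℓ → 0 < demand s N' → ∃ i ∈ N', 0 < sat s o i

/-- The election of the clique reduction: voters are `[ν] ⊕ N_0` with `|N_0| = (κ-1)·ν`,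
candidates `p_1, p_2, p_3` encoded as `0, 1, 2 : Fin 3`, and `ℓ = ν` rounds. -/
def cliqueElection {ν : ℕ} (κ : ℕ) (G : SimpleGraph (Fin ν)) [DecidableRel G.Adj] :
    (Fin ν ⊕ Fin ((κ - 1) * ν)) → Fin ν → Finset (Fin 3)
  | Sum.inl i => fun t => if t = i then {1} else if G.Adj i t then {0, 1} else {0}
  | Sum.inr _ => fun _ => {2}

lemma filter_inst_irrel {α : Type*} (p : α → Prop) (h1 h2 : DecidablePred p) (s : Finset α) :
    @Finset.filter α p h1 s = @Finset.filter α p h2 s := by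
  have : h1 = h2 := Subsingleton.elim h1 h2
  subst this; rfl

lemma agreement_eq {V : Type*} {ℓ : ℕ} {P : Type*} [Fintype P] [DecidableEq P]
    (s : V → Fin ℓ → Finset P) (N' : Finset V)
    [inst : DecidablePred fun t : Fin ℓ => ∃ p : P, ∀ i ∈ N', p ∈ s i t] :
    agreement s N' = (univ.filter fun t : Fin ℓ => ∃ p : P, ∀ i ∈ N', p ∈ s i t).card := by
  unfold agreement
  exact congrArg Finset.card (filter_inst_irrel _ _ _ _)

/-- in the clique-reduction election, the outcome `(p_3, …, p_3)` fails to
provide weak JR if and only if `G` contains a clique of size `κ`. -/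
theorem const_p3_fails_wJR_iff_clique {ν κ : ℕ} (hν : 0 < ν) (hκ : 0 < κ)
    (G : SimpleGraph (Fin ν)) [DecidableRel G.Adj] :
    ¬ wJR (cliqueElection κ G) (fun _ => (2 : Fin 3)) ↔
      ∃ V' : Finset (Fin ν), G.IsNClique κ V' := by

  have hcardV : Fintype.card (Fin ν ⊕ Fin ((κ - 1) * ν)) = κ * ν := by
    simp only [Fintype.card_sum, Fintype.card_fin]
    have h1 : ν + (κ - 1) * ν = ((κ - 1) + 1) * ν := by ring
    rw [h1, Nat.sub_add_cancel hκ]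
  constructor
  · intro hw
    rw [wJR] at hw
    push_neg at hw
    obtain ⟨N', hag, hdem, hsat⟩ := hw
    -- no inr voters in N'
    have hnoinr : ∀ j, Sum.inr j ∉ N' := by
      intro j hj
      have h0 := hsat (Sum.inr j) hj
      have h1 : sat (cliqueElection κ G) (fun _ => (2 : Fin 3)) (Sum.inr j) = ν := by
        simp [sat, cliqueElection]
      omega
    set S : Finset (Fin ν) := univ.filter (fun a => Sum.inl a ∈ N') with hS
    have hmemS : ∀ a : Fin ν, a ∈ S ↔ Sum.inl a ∈ N' := by
      intro a; simp [hS]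
    have hNS : N' = S.image Sum.inl := by
      ext x
      cases x with
      | inl a => simp [hS]
      | inr j => simp [hS, hnoinr j]
    have hcardS : N'.card = S.card := by
      rw [hNS]; exact Finset.card_image_of_injective _ Sum.inl_injective
    -- agreement = ν means all rounds agree
    have hagall : ∀ t : Fin ν, ∃ p : Fin 3, ∀ i ∈ N', p ∈ cliqueElection κ G i t := by
      have hag2 := hag
      rw [agreement_eq] at hag2
      have hag3 := hag2.trans (show ν = (univ : Finset (Fin ν)).card by simp)
      intro t
      exact Finset.filter_card_eq hag3 t (mem_univ t)
    -- S is a clique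
    have hclique : G.IsClique (↑S : Set (Fin ν)) := by
      intro i hi j hj hij
      have hiN : Sum.inl i ∈ N' := (hmemS i).mp (Finset.mem_coe.mp hi)
      have hjN : Sum.inl j ∈ N' := (hmemS j).mp (Finset.mem_coe.mp hj)
      obtain ⟨p, hp⟩ := hagall j
      have hpj := hp (Sum.inl j) hjN
      have hpi := hp (Sum.inl i) hiN
      simp only [cliqueElection, if_pos rfl] at hpj
      have hp1 : p = 1 := by simpa using hpj
      subst hp1
      have hji : ¬ (j = i) := fun h => hij h.symm
      simp only [cliqueElection, if_neg hji] at hpi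
      by_contra hadj
      rw [if_neg hadj] at hpi
      simp at hpi
    -- κ ≤ |S|
    have hκS : κ ≤ S.card := by
      simp only [demand] at hdem
      rw [hag, hcardV, hcardS] at hdem
      have hle : κ * ν ≤ ν * S.card := by
        by_contra h
        push_neg at h
        rw [Nat.div_eq_of_lt h] at hdem
        exact absurd hdem (lt_irrefl 0)
      have hle2 : κ * ν ≤ S.card * ν := by
        rw [Nat.mul_comm ν S.card] at hle; exact hle
      exact Nat.le_of_mul_le_mul_right hle2 hν
    obtain ⟨T, hTS, hTcard⟩ := Finset.exists_subset_card_eq hκS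
    exact ⟨T, hclique.subset (by exact_mod_cast hTS), hTcard⟩
  · rintro ⟨V', hcl, hcard⟩
    intro hw
    set N' : Finset (Fin ν ⊕ Fin ((κ - 1) * ν)) := V'.image Sum.inl with hN
    have hag : agreement (cliqueElection κ G) N' = ν := by
      rw [agreement_eq, Finset.filter_true_of_mem, Finset.card_univ, Fintype.card_fin]
      intro t _
      by_cases htV : t ∈ V'
      · refine ⟨1, ?_⟩
        rintro i hi
        simp only [hN, mem_image] at hi
        obtain ⟨a, ha, rfl⟩ := hi
        show (1 : Fin 3) ∈ cliqueElection κ G (Sum.inl a) t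
        by_cases hta : t = a
        · simp only [cliqueElection, if_pos hta]; decide
        · have hadj : G.Adj a t :=
            hcl (Finset.mem_coe.mpr ha) (Finset.mem_coe.mpr htV) (fun h => hta h.symm)
          simp only [cliqueElection, if_neg hta, if_pos hadj]; decide
      · refine ⟨0, ?_⟩
        rintro i hi
        simp only [hN, mem_image] at hi
        obtain ⟨a, ha, rfl⟩ := hi
        have hta : ¬ (t = a) := fun h => htV (h ▸ ha)
        show (0 : Fin 3) ∈ cliqueElection κ G (Sum.inl a) t
        simp only [cliqueElection, if_neg hta]
        by_cases hadj : G.Adj a t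
        · rw [if_pos hadj]; decide
        · rw [if_neg hadj]; decide
    have hdem : 0 < demand (cliqueElection κ G) N' := by
      simp only [demand]
      rw [hag, hcardV, hN, Finset.card_image_of_injective _ Sum.inl_injective, hcard]
      rw [Nat.mul_comm ν κ, Nat.div_self (Nat.mul_pos hκ hν)]
      exact Nat.one_pos
    obtain ⟨i, hi, hpos⟩ := hw N' hag hdem
    cases i with
    | inl a =>
      have hz : sat (cliqueElection κ G) (fun _ => (2 : Fin 3)) (Sum.inl a) = 0 := by
        simp only [sat]
        rw [Finset.card_eq_zero, Finset.filter_eq_empty_iff]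
        intro t _
        show ¬ (2 : Fin 3) ∈ cliqueElection κ G (Sum.inl a) t
        simp only [cliqueElection]
        split_ifs <;> decide
      omega
    | inr j =>
      simp [hN] at hi
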